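/- For every nonnegative integer n, Q_0(n) = pod(n) + 2 * \sum_{k=1}^{\infty} (-1)^k pod(n - 4k^2), where terms with negative argument are zero. -/

import Mathlib

/-- `Q0 n`: number of partitions of `n` into distinct parts none divisible by 4. -/
noncomputable def Q0 (n : ℕ) : ℕ :=
  Nat.card {p : n.Partition // p.parts.Nodup ∧ ∀ x ∈ p.parts, ¬ (4 ∣ x)}

/-- `pod n`: partitions of `n` into parts not congruent to 2 mod 4. -/
noncomputable def pod (n : ℕ) : ℕ :=
  Nat.card {p : n.Partition // ∀ x ∈ p.parts, x % 4 ≠ 2}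

/-- `pod` extended to integer arguments, zero on negatives. -/
noncomputable def podZ (m : ℤ) : ℕ := if 0 ≤ m then pod m.toNat else 0

/-!
Let `φ(q) = ∑_{k ∈ ℤ} (-1)^k q^{k²}`. The claim is the coefficient form of
`∑ Q0(n) qⁿ = φ(q⁴) · ∑ pod(n) qⁿ`. Multiplying `∏_{4 ∤ m} (1 + q^m)` by `∏_{m ≢ 2 (4)} (1 - q^m)`
and using `(1 + q^m)(1 - q^m) = 1 - q^{2m}` twice leaves `(q⁴; q⁸)²_∞ (q⁸; q⁸)_∞`, which is `φ(q⁴)`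
by Gauss's identity `φ(q) = (q; q²)²_∞ (q²; q²)_∞`. Gauss's identity is the specialisation `z = -1`
of the finite Jacobi triple product
`∏_{j<n} (1 + z q^{2j+1})(z + q^{2j+1}) = ∑_i [2n, i]_{q²} q^{(i-n)²} z^i`,
because `[2n, n+k]_{q²} (q²; q²)_n ≡ 1` modulo `q^{2(n-k+1)}`.
Since only the coefficient of `qⁿ` matters, everything is done modulo `q^{n+1}`, where the
infinite products may be truncated.
-/

open Finset

lemma prod_range_mul_eq_prod_prod {M : Type*} [CommMonoid M] (f : ℕ → M) (k N : ℕ) :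
    ∏ i ∈ range (k * N), f i = ∏ j ∈ range N, ∏ r ∈ range k, f (k * j + r) := by
  induction N with
  | zero => simp
  | succ N ih => rw [mul_add_one, prod_range_add, ih, prod_range_succ]

lemma prod_range_two_mul {M : Type*} [CommMonoid M] (f : ℕ → M) (N : ℕ) :
    ∏ i ∈ range (2 * N), f i = ∏ j ∈ range N, (f (2 * j) * f (2 * j + 1)) := by
  simp [prod_range_mul_eq_prod_prod, prod_range_succ]

lemma sum_range_two_mul_add_one {M : Type*} [AddCommMonoid M] (f : ℕ → M) (n : ℕ) :
    ∑ i ∈ range (2 * n + 1), f i = f n + ∑ k ∈ Icc 1 n, (f (n - k) + f (n + k)) := by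
  rw [show 2 * n + 1 = (n + 1) + n by ring, sum_range_add, sum_range_succ, ← sum_range_reflect,
    add_comm _ (f n), add_assoc, ← sum_add_distrib, ← Ico_add_one_right_eq_Icc,
    sum_Ico_eq_sum_range]
  congr 1
  refine sum_congr rfl fun k hk => ?_
  rw [mem_range] at hk
  congr 2 <;> omega

section Congruences

variable {A : Type*} [CommRing A]

lemma pow_smodEq_zero (q : A) {d e : ℕ} (h : d ≤ e) : q ^ e ≡ 0 [SMOD Ideal.span {q ^ d}] := by
  rw [SModEq.zero, Ideal.mem_span_singleton]
  exact pow_dvd_pow q h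

lemma one_sub_pow_smodEq_one (q : A) {d e : ℕ} (h : d ≤ e) :
    1 - q ^ e ≡ 1 [SMOD Ideal.span {q ^ d}] := by
  simpa using (SModEq.refl 1).sub (pow_smodEq_zero q h)

lemma one_add_pow_smodEq_one (q : A) {d e : ℕ} (h : d ≤ e) :
    1 + q ^ e ≡ 1 [SMOD Ideal.span {q ^ d}] := by
  simpa using (SModEq.refl 1).add (pow_smodEq_zero q h)

lemma SModEq.pow_mul {q x y : A} {a : ℕ} (h : x ≡ y [SMOD Ideal.span {q ^ a}]) (b : ℕ) :
    q ^ b * x ≡ q ^ b * y [SMOD Ideal.span {q ^ (b + a)}] := by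
  rw [SModEq.sub_mem, Ideal.mem_span_singleton, ← mul_sub, pow_add] at *
  exact mul_dvd_mul_left _ h

lemma SModEq.pow_mono {q x y : A} {d e : ℕ} (hde : d ≤ e)
    (h : x ≡ y [SMOD Ideal.span {q ^ e}]) : x ≡ y [SMOD Ideal.span {q ^ d}] :=
  h.mono (Ideal.span_singleton_le_span_singleton.mpr (pow_dvd_pow q hde))

lemma prod_range_smodEq_of_le {I : Ideal A} {f : ℕ → A} {N N' : ℕ} (hN : N ≤ N')
    (hf : ∀ j, N ≤ j → f j ≡ 1 [SMOD I]) : ∏ j ∈ range N', f j ≡ ∏ j ∈ range N, f j [SMOD I] := by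
  rw [← prod_range_mul_prod_Ico f hN]
  calc (∏ j ∈ range N, f j) * ∏ j ∈ Ico N N', f j
      ≡ (∏ j ∈ range N, f j) * ∏ j ∈ Ico N N', (1 : A) [SMOD I] := by
        gcongr with j hj
        exact hf j (mem_Ico.mp hj).1
    _ = ∏ j ∈ range N, f j := by rw [prod_const_one, mul_one]

lemma smodEq_one_of_mul_one_sub_eq_one {u x : A} (h : u * (1 - x) = 1) :
    u ≡ 1 [SMOD Ideal.span {x}] := by
  rw [SModEq.sub_mem, Ideal.mem_span_singleton]
  exact ⟨u, by linear_combination h⟩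

end Congruences

section QBinom

variable {R : Type*} [CommRing R] (Q : R)

/-- The Gaussian binomial coefficient `[n, k]_Q`. -/
def qBinom : ℕ → ℕ → R
  | _, 0 => 1
  | 0, _ + 1 => 0
  | n + 1, k + 1 => Q ^ (k + 1) * qBinom n (k + 1) + qBinom n k

/-- `(Q; Q)_n`. -/
def qPochhammer (n : ℕ) : R := ∏ j ∈ range n, (1 - Q ^ (j + 1))

@[simp] lemma qBinom_zero_right (n : ℕ) : qBinom Q n 0 = 1 := by cases n <;> rfl

lemma qBinom_succ_succ (n k : ℕ) :
    qBinom Q (n + 1) (k + 1) = Q ^ (k + 1) * qBinom Q n (k + 1) + qBinom Q n k := rfl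

lemma qBinom_eq_zero_of_lt {n k : ℕ} (h : n < k) : qBinom Q n k = 0 := by
  induction n generalizing k with
  | zero => obtain ⟨k, rfl⟩ := Nat.exists_eq_add_one_of_ne_zero (by omega : k ≠ 0); rfl
  | succ n ih =>
    obtain ⟨k, rfl⟩ := Nat.exists_eq_add_one_of_ne_zero (by omega : k ≠ 0)
    rw [qBinom_succ_succ, ih (by omega), ih (by omega), mul_zero, add_zero]

@[simp] lemma qBinom_self (n : ℕ) : qBinom Q n n = 1 := by
  induction n with
  | zero => rfl
  | succ n ih => rw [qBinom_succ_succ, qBinom_eq_zero_of_lt Q (by omega), mul_zero, zero_add, ih]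

/-- The second q-Pascal rule; the truncated exponent `n - k` is harmless, since for `n < k` both
sides vanish. -/
lemma qBinom_succ_succ' (n k : ℕ) :
    qBinom Q (n + 1) (k + 1) = qBinom Q n (k + 1) + Q ^ (n - k) * qBinom Q n k := by
  induction n generalizing k with
  | zero => cases k <;> simp [qBinom_succ_succ, qBinom_eq_zero_of_lt]
  | succ n ih =>
    rw [qBinom_succ_succ Q (n + 1) k]
    rcases k with _ | k
    · simp only [qBinom_zero_right, mul_one, Nat.sub_zero]
      linear_combination Q * ih 0 - qBinom_succ_succ Q n 0
        + (Q ^ (n + 1) - 1) * qBinom_zero_right Q n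
    rw [Nat.add_sub_add_right]
    rcases lt_or_ge k n with hk | hk
    · have h : Q ^ (k + 2) * Q ^ (n - (k + 1)) = Q ^ (n - k) * Q ^ (k + 1) := by
        rw [← pow_add, ← pow_add]; congr 1; omega
      linear_combination Q ^ (k + 2) * ih (k + 1) + ih k - qBinom_succ_succ Q n (k + 1)
        - Q ^ (n - k) * qBinom_succ_succ Q n k + qBinom Q n (k + 1) * h
    · rw [qBinom_eq_zero_of_lt Q (by omega : n + 1 < k + 2), mul_zero, zero_add, zero_add]
      rcases hk.eq_or_lt with rfl | hk
      · simp
      · simp [qBinom_eq_zero_of_lt Q (by omega : n + 1 < k + 1)]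

lemma qBinom_symm {n k : ℕ} (h : k ≤ n) : qBinom Q n (n - k) = qBinom Q n k := by
  induction n generalizing k with
  | zero => obtain rfl := Nat.le_zero.mp h; rfl
  | succ n ih =>
    rcases k with _ | k
    · simp
    rcases (Nat.le_of_succ_le_succ h).eq_or_lt with rfl | hk
    · simp
    obtain ⟨m, hm⟩ : ∃ m, n - k = m + 1 := ⟨n - k - 1, by omega⟩
    rw [Nat.add_sub_add_right, hm, qBinom_succ_succ', qBinom_succ_succ, ← hm, ih hk.le,
      show m = n - (k + 1) by omega, ih hk, show n - (n - (k + 1)) = k + 1 by omega]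
    ring

lemma qBinom_add_mul_qPochhammer (a b : ℕ) :
    qBinom Q (a + b) a * qPochhammer Q b = ∏ j ∈ range b, (1 - Q ^ (a + j + 1)) := by
  induction b generalizing a with
  | zero => simp [qPochhammer]
  | succ b ihb =>
    induction a with
    | zero => simp [qPochhammer]
    | succ a iha =>
      have step : qBinom Q (a + 1 + (b + 1)) (a + 1)
          = Q ^ (a + 1) * qBinom Q (a + 1 + b) (a + 1) + qBinom Q (a + (b + 1)) a := by
        rw [show a + 1 + (b + 1) = a + b + 1 + 1 by omega, qBinom_succ_succ,
          show a + b + 1 = a + 1 + b by omega, show a + 1 + b = a + (b + 1) by omega]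
      have hP : qPochhammer Q (b + 1) = qPochhammer Q b * (1 - Q ^ (b + 1)) := prod_range_succ _ _
      have h1 : ∏ j ∈ range (b + 1), (1 - Q ^ (a + j + 1))
          = (1 - Q ^ (a + 1)) * ∏ j ∈ range b, (1 - Q ^ (a + 1 + j + 1)) := by
        rw [prod_range_succ', mul_comm]; simp only [add_assoc, add_comm 1, zero_add]
      have h2 : ∏ j ∈ range (b + 1), (1 - Q ^ (a + 1 + j + 1))
          = (∏ j ∈ range b, (1 - Q ^ (a + 1 + j + 1))) * (1 - Q ^ (a + 1 + b + 1)) :=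
        prod_range_succ _ _
      have hQ : Q ^ (a + 1 + b + 1) = Q ^ (a + 1) * Q ^ (b + 1) := by rw [← pow_add]; ring_nf
      rw [step, h2, add_mul, iha, h1, hP, hQ, ← ihb (a + 1)]
      ring

lemma qBinom_add_two_one (M : ℕ) :
    qBinom Q (M + 2) 1 = Q * qBinom Q M 1 + (1 + Q ^ (M + 1)) := by
  rw [qBinom_succ_succ, qBinom_succ_succ']
  simp only [qBinom_zero_right, Nat.sub_zero]
  ring

lemma qBinom_add_two_add_two (M m : ℕ) :
    qBinom Q (M + 2) (m + 2) = Q ^ (m + 2) * qBinom Q M (m + 2)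
      + (1 + Q ^ (M + 1)) * qBinom Q M (m + 1) + Q ^ (M - m) * qBinom Q M m := by
  rw [qBinom_succ_succ, qBinom_succ_succ', qBinom_succ_succ']
  rcases lt_or_ge m M with hm | hm
  · have h : Q ^ (m + 2) * Q ^ (M - (m + 1)) = Q ^ (M + 1) := by
      rw [← pow_add]; congr 1; omega
    linear_combination qBinom Q M (m + 1) * h
  · rw [qBinom_eq_zero_of_lt Q (by omega : M < m + 1)]
    ring

end QBinom

section JacobiTripleProduct

open Polynomial

variable {R : Type*} [CommRing R] (q : R)

def jacobiCoeff (n i : ℕ) : R := qBinom (q ^ 2) (2 * n) i * q ^ (((i : ℤ) - n).natAbs ^ 2)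

lemma jacobiCoeff_eq_zero {n i : ℕ} (h : 2 * n < i) : jacobiCoeff q n i = 0 := by
  rw [jacobiCoeff, qBinom_eq_zero_of_lt _ h, zero_mul]

lemma jacobiCoeff_succ_zero (n : ℕ) :
    jacobiCoeff q (n + 1) 0 = q ^ (2 * n + 1) * jacobiCoeff q n 0 := by
  simp only [jacobiCoeff, qBinom_zero_right, one_mul, ← pow_add]
  congr 1
  zify
  simp only [sq_abs]
  ring

lemma jacobiCoeff_succ_one (n : ℕ) :
    jacobiCoeff q (n + 1) 1
      = q ^ (2 * n + 1) * jacobiCoeff q n 1 + (1 + q ^ (4 * n + 2)) * jacobiCoeff q n 0 := by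
  have e₁ : (((1 : ℕ) : ℤ) - (n + 1 : ℕ)).natAbs ^ 2 = ((0 : ℕ) - (n : ℤ)).natAbs ^ 2 := by
    zify; simp only [sq_abs]; ring
  have e₂ : q ^ 2 * q ^ (((0 : ℕ) : ℤ) - n).natAbs ^ 2
      = q ^ (2 * n + 1) * q ^ (((1 : ℕ) : ℤ) - n).natAbs ^ 2 := by
    rw [← pow_add, ← pow_add]; congr 1; zify; simp only [sq_abs]; ring
  simp only [jacobiCoeff, mul_add, qBinom_add_two_one, e₁, qBinom_zero_right, ← pow_mul]
  linear_combination qBinom (q ^ 2) (2 * n) 1 * e₂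

lemma jacobiCoeff_succ_add_two (n m : ℕ) :
    jacobiCoeff q (n + 1) (m + 2) = q ^ (2 * n + 1) * jacobiCoeff q n (m + 2)
      + (1 + q ^ (4 * n + 2)) * jacobiCoeff q n (m + 1) + q ^ (2 * n + 1) * jacobiCoeff q n m := by
  rcases le_or_gt m (2 * n) with hm | hm
  · have e₁ : (((m + 2 : ℕ) : ℤ) - (n + 1 : ℕ)).natAbs ^ 2
        = (((m + 1 : ℕ) : ℤ) - n).natAbs ^ 2 := by
      zify; simp only [sq_abs]; ring
    have e₂ : (q ^ 2) ^ (m + 2) * q ^ (((m + 1 : ℕ) : ℤ) - n).natAbs ^ 2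
        = q ^ (2 * n + 1) * q ^ (((m + 2 : ℕ) : ℤ) - n).natAbs ^ 2 := by
      rw [← pow_mul, ← pow_add, ← pow_add]; congr 1; zify; simp only [sq_abs]; ring
    have e₃ : (q ^ 2) ^ (2 * n - m) * q ^ (((m + 1 : ℕ) : ℤ) - n).natAbs ^ 2
        = q ^ (2 * n + 1) * q ^ (((m : ℕ) : ℤ) - n).natAbs ^ 2 := by
      rw [← pow_mul, ← pow_add, ← pow_add]; congr 1; zify [hm]; simp only [sq_abs]; ring
    simp only [jacobiCoeff, show 2 * (n + 1) = 2 * n + 2 by ring, qBinom_add_two_add_two, e₁,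
      ← pow_mul]
    linear_combination qBinom (q ^ 2) (2 * n) (m + 2) * e₂ + qBinom (q ^ 2) (2 * n) m * e₃
  · simp only [jacobiCoeff_eq_zero q (by omega : 2 * (n + 1) < m + 2),
      jacobiCoeff_eq_zero q (by omega : 2 * n < m + 2),
      jacobiCoeff_eq_zero q (by omega : 2 * n < m + 1),
      jacobiCoeff_eq_zero q hm]
    ring

theorem jacobi_triple_product_finite (n : ℕ) :
    ∏ j ∈ range n, (1 + X * C (q ^ (2 * j + 1))) * (X + C (q ^ (2 * j + 1)))
      = ∑ i ∈ range (2 * n + 1), C (jacobiCoeff q n i) * X ^ i := by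
  have coeff_sum (n j : ℕ) :
      (∑ i ∈ range (2 * n + 1), C (jacobiCoeff q n i) * X ^ i).coeff j = jacobiCoeff q n j := by
    simp only [finsetSum_coeff, coeff_C_mul_X_pow, sum_ite_eq, mem_range]
    split_ifs with h
    · rfl
    · exact (jacobiCoeff_eq_zero q (by omega)).symm
  induction n with
  | zero => ext j; rw [coeff_sum]; cases j <;> simp [jacobiCoeff, qBinom_eq_zero_of_lt, coeff_one]
  | succ n ih =>
    have quad : (1 + X * C (q ^ (2 * n + 1))) * (X + C (q ^ (2 * n + 1)))
        = C (q ^ (2 * n + 1)) + X * C (1 + q ^ (4 * n + 2)) + X ^ 2 * C (q ^ (2 * n + 1)) := by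
      simp only [map_add, map_one, show 4 * n + 2 = (2 * n + 1) + (2 * n + 1) by ring, pow_add,
        map_mul]
      ring
    ext j
    rw [prod_range_succ, ih, quad, mul_add, mul_add, ← mul_assoc, ← mul_assoc, coeff_sum]
    simp only [coeff_add, coeff_mul_C, mul_comm _ X, mul_comm _ (X ^ 2)]
    rcases j with _ | _ | m
    · rw [coeff_X_mul_zero, coeff_X_pow_mul', if_neg (by omega), coeff_sum,
        jacobiCoeff_succ_zero]
      ring
    · rw [coeff_X_mul, coeff_X_pow_mul', if_neg (by omega), coeff_sum, coeff_sum,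
        jacobiCoeff_succ_one]
      ring
    · simp only [coeff_X_mul, coeff_X_pow_mul, coeff_sum, jacobiCoeff_succ_add_two]
      ring

end JacobiTripleProduct

section Gauss

variable {A : Type*} [CommRing A]

lemma qBinom_mul_qPochhammer_smodEq_one (Q : A) {a b c : ℕ} (hab : b ≤ a) (hbc : b ≤ c) :
    qBinom Q (a + b) a * qPochhammer Q c ≡ 1 [SMOD Ideal.span {Q ^ (b + 1)}] := by
  obtain ⟨c, rfl⟩ := Nat.exists_eq_add_of_le hbc
  rw [qPochhammer, prod_range_add, ← qPochhammer, ← mul_assoc, qBinom_add_mul_qPochhammer]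
  calc (∏ j ∈ range b, (1 - Q ^ (a + j + 1))) * ∏ j ∈ range c, (1 - Q ^ (b + j + 1))
      ≡ (∏ j ∈ range b, (1 : A)) * ∏ j ∈ range c, (1 : A) [SMOD Ideal.span {Q ^ (b + 1)}] := by
        gcongr <;> exact one_sub_pow_smodEq_one Q (by omega)
    _ = 1 := by simp

lemma prod_one_sub_sq_eq_sum_jacobiCoeff (q : A) (n : ℕ) :
    ∏ j ∈ range n, (1 - q ^ (2 * j + 1)) ^ 2
      = ∑ i ∈ range (2 * n + 1), (-1) ^ (n + i) * jacobiCoeff q n i := by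
  have h := congrArg (Polynomial.eval (-1)) (jacobi_triple_product_finite q n)
  simp only [Polynomial.eval_prod, Polynomial.eval_finsetSum, Polynomial.eval_mul,
    Polynomial.eval_add, Polynomial.eval_one, Polynomial.eval_X, Polynomial.eval_C,
    Polynomial.eval_pow] at h
  calc ∏ j ∈ range n, (1 - q ^ (2 * j + 1)) ^ 2
      = (-1) ^ n * ∏ j ∈ range n, -1 * (1 - q ^ (2 * j + 1)) ^ 2 := by
        rw [prod_mul_distrib, prod_const, card_range, ← mul_assoc, ← pow_add, ← two_mul, pow_mul]
        simp
    _ = (-1) ^ n * ∏ j ∈ range n, (1 + -1 * q ^ (2 * j + 1)) * (-1 + q ^ (2 * j + 1)) := by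
        congr 1
        exact prod_congr rfl fun _ _ => by ring
    _ = _ := by rw [h, mul_sum]; simp_rw [pow_add, mul_assoc, mul_comm (jacobiCoeff q n _)]

lemma jacobiCoeff_add (q : A) (n k : ℕ) :
    jacobiCoeff q n (n + k) = qBinom (q ^ 2) (2 * n) (n + k) * q ^ (k ^ 2) := by
  simp [jacobiCoeff]

lemma jacobiCoeff_sub (q : A) {n k : ℕ} (hk : k ≤ n) :
    jacobiCoeff q n (n - k) = qBinom (q ^ 2) (2 * n) (n + k) * q ^ (k ^ 2) := by
  rw [jacobiCoeff, ← qBinom_symm _ (by omega : n + k ≤ 2 * n),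
    show 2 * n - (n + k) = n - k by omega]
  congr 2
  zify [hk]
  simp

/-- Gauss's identity `∑_{k ∈ ℤ} (-1)^k q^{k²} = (q; q²)_∞² (q²; q²)_∞`, modulo `q ^ (n + 1)`. -/
theorem gauss_smodEq (q : A) (n : ℕ) :
    ∏ j ∈ range n, (1 - q ^ (2 * j + 1)) ^ 2 * (1 - q ^ (2 * j + 2))
      ≡ 1 + 2 * ∑ k ∈ Icc 1 n, (-1) ^ k * q ^ (k ^ 2) [SMOD Ideal.span {q ^ (n + 1)}] := by
  set P := qPochhammer (q ^ 2) n
  have sign (m k : ℕ) : (-1 : A) ^ (2 * m + k) = (-1) ^ k := by simp [pow_add, pow_mul]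
  have pair : ∀ k ∈ Icc 1 n, (-1) ^ (n + (n - k)) * jacobiCoeff q n (n - k)
      + (-1) ^ (n + (n + k)) * jacobiCoeff q n (n + k)
      = 2 * (-1) ^ k * q ^ (k ^ 2) * qBinom (q ^ 2) (2 * n) (n + k) := fun k hk => by
    have hk := (mem_Icc.mp hk).2
    rw [show n + (n - k) = 2 * (n - k) + k by omega, show n + (n + k) = 2 * n + k by ring, sign,
      sign, jacobiCoeff_sub q hk, jacobiCoeff_add]
    ring
  have center : qBinom (q ^ 2) (2 * n) n * P ≡ 1 [SMOD Ideal.span {q ^ (n + 1)}] := by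
    have h := qBinom_mul_qPochhammer_smodEq_one (q ^ 2) (le_refl n) (le_refl n)
    rw [← two_mul, ← pow_mul] at h
    exact h.pow_mono (by omega)
  have side : ∀ k ∈ Icc 1 n, q ^ (k ^ 2) * (qBinom (q ^ 2) (2 * n) (n + k) * P)
      ≡ q ^ (k ^ 2) * 1 [SMOD Ideal.span {q ^ (n + 1)}] := fun k hk => by
    have hk := (mem_Icc.mp hk).2
    have h := qBinom_mul_qPochhammer_smodEq_one (q ^ 2) (by omega : n - k ≤ n + k) (Nat.sub_le n k)
    rw [show n + k + (n - k) = 2 * n by omega, ← pow_mul] at h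
    refine (h.pow_mul (k ^ 2)).pow_mono ?_
    zify [hk]
    nlinarith [sq_nonneg ((k : ℤ) - 1)]
  calc ∏ j ∈ range n, (1 - q ^ (2 * j + 1)) ^ 2 * (1 - q ^ (2 * j + 2))
      = (∏ j ∈ range n, (1 - q ^ (2 * j + 1)) ^ 2) * P := by
        rw [prod_mul_distrib]
        simp only [P, qPochhammer]
        congr 1
        exact prod_congr rfl fun j _ => by ring
    _ = qBinom (q ^ 2) (2 * n) n * P
          + ∑ k ∈ Icc 1 n, 2 * (-1) ^ k * (q ^ (k ^ 2) * (qBinom (q ^ 2) (2 * n) (n + k) * P)) := by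
        rw [prod_one_sub_sq_eq_sum_jacobiCoeff, sum_range_two_mul_add_one, sum_congr rfl pair,
          jacobiCoeff, show n + n = 2 * n + 0 by ring, sign]
        simp only [pow_zero, one_mul, sub_self, Int.natAbs_zero, ne_eq, OfNat.ofNat_ne_zero,
          not_false_eq_true, zero_pow, mul_one]
        rw [add_mul, sum_mul]
        exact congrArg _ (sum_congr rfl fun _ _ => by ring)
    _ ≡ 1 + ∑ k ∈ Icc 1 n, 2 * (-1) ^ k * (q ^ (k ^ 2) * 1) [SMOD Ideal.span {q ^ (n + 1)}] :=
        center.add (SModEq.sum fun k hk => (SModEq.refl _).mul (side k hk))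
    _ = 1 + 2 * ∑ k ∈ Icc 1 n, (-1) ^ k * q ^ (k ^ 2) := by
        rw [mul_sum]
        exact congrArg _ (sum_congr rfl fun _ _ => by ring)

theorem prod_factors_smodEq_theta (q : A) (n : ℕ) :
    ∏ i ∈ range (4 * n), (if 4 ∣ i + 1 then 1 else 1 + q ^ (i + 1)) *
        (if (i + 1) % 4 ≠ 2 then 1 - q ^ (i + 1) else 1)
      ≡ 1 + 2 * ∑ k ∈ Icc 1 n, (-1) ^ k * q ^ (4 * k ^ 2) [SMOD Ideal.span {q ^ (n + 1)}] := by
  have block (j : ℕ) : ∏ r ∈ range 4, (if 4 ∣ 4 * j + r + 1 then 1 else 1 + q ^ (4 * j + r + 1)) *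
      (if (4 * j + r + 1) % 4 ≠ 2 then 1 - q ^ (4 * j + r + 1) else 1)
      = (1 - q ^ (4 * (2 * j) + 2)) * (1 - q ^ (4 * (2 * j + 1) + 2))
        * (1 + q ^ (4 * j + 2)) * (1 - q ^ (4 * j + 4)) := by
    simp only [prod_range_succ, prod_range_zero, one_mul]
    rw [if_neg (by omega), if_pos (by omega), if_neg (by omega), if_neg (by omega),
      if_neg (by omega), if_pos (by omega), if_pos (by omega), if_pos (by omega)]
    ring
  set I := Ideal.span {q ^ (n + 1)}
  calc _ = ∏ j ∈ range n, (1 - q ^ (4 * (2 * j) + 2)) * (1 - q ^ (4 * (2 * j + 1) + 2))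
          * (1 + q ^ (4 * j + 2)) * (1 - q ^ (4 * j + 4)) := by
        rw [prod_range_mul_eq_prod_prod]
        exact prod_congr rfl fun j _ => by simpa only [add_assoc] using block j
    _ = (∏ j ∈ range (2 * n), (1 - q ^ (4 * j + 2))) * (∏ j ∈ range n, (1 + q ^ (4 * j + 2)))
          * ∏ j ∈ range n, (1 - q ^ (4 * j + 4)) := by
        rw [prod_range_two_mul, prod_mul_distrib, prod_mul_distrib]
    _ ≡ (∏ j ∈ range n, (1 - q ^ (4 * j + 2))) * (∏ j ∈ range n, (1 + q ^ (4 * j + 2)))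
          * ∏ j ∈ range (2 * n), (1 - q ^ (4 * j + 4)) [SMOD I] := by
        gcongr ?_ * _ * ?_
        · exact prod_range_smodEq_of_le (by omega) fun j hj => one_sub_pow_smodEq_one q (by omega)
        · exact (prod_range_smodEq_of_le (by omega) fun j hj =>
            one_sub_pow_smodEq_one q (by omega)).symm
    _ = ∏ j ∈ range n, (1 - (q ^ 4) ^ (2 * j + 1)) ^ 2 * (1 - (q ^ 4) ^ (2 * j + 2)) := by
        rw [prod_range_two_mul, ← prod_mul_distrib, ← prod_mul_distrib]
        refine prod_congr rfl fun j _ => ?_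
        simp only [← pow_mul]
        ring_nf
    _ ≡ 1 + 2 * ∑ k ∈ Icc 1 n, (-1) ^ k * (q ^ 4) ^ (k ^ 2) [SMOD I] :=
        (gauss_smodEq (q ^ 4) n).mono <| Ideal.span_singleton_le_span_singleton.mpr <|
          pow_dvd_pow_of_dvd (dvd_pow_self q four_ne_zero) _
    _ = 1 + 2 * ∑ k ∈ Icc 1 n, (-1) ^ k * q ^ (4 * k ^ 2) := by simp only [← pow_mul]

end Gauss

open PowerSeries
open scoped PowerSeries.WithPiTopology

section PowerSeries

variable {R : Type*} [CommRing R]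

lemma smodEq_X_pow_iff {f g : R⟦X⟧} {d : ℕ} :
    f ≡ g [SMOD Ideal.span {X ^ d}] ↔ ∀ m < d, coeff m f = coeff m g := by
  simp [SModEq.sub_mem, Ideal.mem_span_singleton, X_pow_dvd_iff, sub_eq_zero]

lemma HasProd.smodEq_prod_range [TopologicalSpace R] [T2Space R] {g : ℕ → R⟦X⟧} {G : R⟦X⟧}
    (hG : HasProd g G) {d N : ℕ} (hg : ∀ i, N ≤ i → g i ≡ 1 [SMOD Ideal.span {X ^ d}]) :
    G ≡ ∏ i ∈ range N, g i [SMOD Ideal.span {X ^ d}] := by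
  refine smodEq_X_pow_iff.mpr fun m hm => ?_
  refine tendsto_nhds_unique (((WithPiTopology.continuous_coeff R m).tendsto G).comp hG)
    (tendsto_const_nhds.congr' ?_)
  filter_upwards [Filter.eventually_ge_atTop (range N)] with s hs
  have : ∏ i ∈ s, g i ≡ ∏ i ∈ range N, g i [SMOD Ideal.span {X ^ d}] := by
    rw [← prod_sdiff hs]
    calc (∏ i ∈ s \ range N, g i) * ∏ i ∈ range N, g i
        ≡ (∏ i ∈ s \ range N, (1 : R⟦X⟧)) * ∏ i ∈ range N, g i [SMOD Ideal.span {X ^ d}] :=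
          (SModEq.prod fun i hi => hg i (by simpa using (mem_sdiff.mp hi).2)).mul SModEq.rfl
      _ = _ := by rw [prod_const_one, one_mul]
  exact (smodEq_X_pow_iff.mp this m hm).symm

lemma tsum_X_pow_mul_mul_one_sub [TopologicalSpace R] [IsTopologicalRing R] [T2Space R] {m : ℕ}
    (hm : m ≠ 0) : (∑' j, X ^ (m * j) : R⟦X⟧) * (1 - X ^ m) = 1 := by
  simp_rw [pow_mul]
  exact WithPiTopology.tsum_pow_mul_one_sub_of_constantCoeff_eq_zero (by simp [hm])

end PowerSeries

theorem hasProd_powerSeriesMk_Q0 :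
    HasProd (fun i ↦ if 4 ∣ i + 1 then 1 else 1 + X ^ (i + 1))
      (PowerSeries.mk fun n ↦ (Q0 n : ℤ)) := by
  convert! Nat.Partition.hasProd_genFun (fun i c ↦ if c = 1 ∧ ¬ 4 ∣ i then (1 : ℤ) else 0) using 1
  · ext1 i
    rw [tsum_eq_single 0 fun j hj => by simp [hj, PowerSeries.smul_eq_C_mul]]
    split_ifs <;> simp_all [PowerSeries.smul_eq_C_mul]
  · ext n
    rw [coeff_mk, Nat.Partition.coeff_genFun, Q0, Nat.card_eq_fintype_card, Fintype.card_subtype]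
    simp only [Finsupp.prod, prod_boole, sum_boole]
    simp only [Multiset.toFinsupp_support, Multiset.toFinsupp_apply, Multiset.mem_toFinset,
      forall_and, Multiset.nodup_iff_count_eq_one]

theorem hasProd_powerSeriesMk_pod :
    HasProd (fun i ↦ if (i + 1) % 4 ≠ 2 then ∑' j, X ^ ((i + 1) * j) else 1)
      (PowerSeries.mk fun n ↦ (pod n : ℤ)) := by
  convert! Nat.Partition.hasProd_powerSeriesMk_card_restricted ℤ (fun i ↦ i % 4 ≠ 2) using 1
  ext n
  simp only [coeff_mk, pod, Nat.card_eq_fintype_card, Fintype.card_subtype,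
    Nat.Partition.restricted]

theorem powerSeriesMk_Q0_smodEq (n : ℕ) :
    PowerSeries.mk (fun m ↦ (Q0 m : ℤ))
      ≡ (1 + 2 * ∑ k ∈ Icc 1 n, (-1) ^ k * X ^ (4 * k ^ 2)) * PowerSeries.mk (fun m ↦ (pod m : ℤ))
      [SMOD Ideal.span {X ^ (n + 1)}] := by
  set A := PowerSeries.mk fun m ↦ (Q0 m : ℤ)
  set P := PowerSeries.mk fun m ↦ (pod m : ℤ)
  set a : ℕ → ℤ⟦X⟧ := fun i ↦ if 4 ∣ i + 1 then 1 else 1 + X ^ (i + 1)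
  set p : ℕ → ℤ⟦X⟧ := fun i ↦ if (i + 1) % 4 ≠ 2 then ∑' j, X ^ ((i + 1) * j) else 1
  set d : ℕ → ℤ⟦X⟧ := fun i ↦ if (i + 1) % 4 ≠ 2 then 1 - X ^ (i + 1) else 1
  have hpd (i : ℕ) : p i * d i = 1 := by
    dsimp only [p, d]
    split_ifs
    exacts [tsum_X_pow_mul_mul_one_sub (Nat.succ_ne_zero i), one_mul 1]
  have hA := hasProd_powerSeriesMk_Q0.smodEq_prod_range (d := n + 1) (N := 4 * n) fun i hi => by
    split_ifs
    exacts [SModEq.rfl, one_add_pow_smodEq_one X (by omega)]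
  have hP := hasProd_powerSeriesMk_pod.smodEq_prod_range (d := n + 1) (N := 4 * n) fun i hi => by
    split_ifs
    exacts [(smodEq_one_of_mul_one_sub_eq_one
      (tsum_X_pow_mul_mul_one_sub (Nat.succ_ne_zero i))).pow_mono (by omega), SModEq.rfl]
  calc A = A * ∏ i ∈ range (4 * n), (p i * d i) := by
        rw [prod_eq_one fun i _ => hpd i, mul_one]
    _ = A * (∏ i ∈ range (4 * n), p i) * ∏ i ∈ range (4 * n), d i := by
        rw [prod_mul_distrib, mul_assoc]
    _ ≡ (∏ i ∈ range (4 * n), a i) * P * ∏ i ∈ range (4 * n), d i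
        [SMOD Ideal.span {X ^ (n + 1)}] := (hA.mul hP.symm).mul SModEq.rfl
    _ = (∏ i ∈ range (4 * n), (a i * d i)) * P := by
        rw [prod_mul_distrib]; ring
    _ ≡ _ [SMOD Ideal.span {X ^ (n + 1)}] := by exact (prod_factors_smodEq_theta X n).mul SModEq.rfl

lemma coeff_theta_mul (f : ℕ → ℤ) (N n : ℕ) :
    coeff n ((1 + 2 * ∑ k ∈ Icc 1 N, (-1) ^ k * X ^ (4 * k ^ 2)) * PowerSeries.mk f)
      = f n + 2 * ∑ k ∈ Icc 1 N, (-1) ^ k * if 4 * k ^ 2 ≤ n then f (n - 4 * k ^ 2) else 0 := by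
  have hC : (2 : ℤ⟦X⟧) * ∑ k ∈ Icc 1 N, (-1) ^ k * X ^ (4 * k ^ 2)
      = ∑ k ∈ Icc 1 N, C (2 * (-1) ^ k) * X ^ (4 * k ^ 2) := by
    rw [mul_sum]; simp [mul_assoc]
  rw [add_mul, one_mul, map_add, coeff_mk, hC, sum_mul, map_sum, mul_sum]
  refine congrArg _ (sum_congr rfl fun k _ => ?_)
  rw [mul_assoc, coeff_C_mul, coeff_X_pow_mul', coeff_mk]
  split_ifs <;> ring

lemma podZ_natCast_sub (n m : ℕ) : podZ ((n : ℤ) - m) = if m ≤ n then pod (n - m) else 0 := by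
  rcases le_or_gt m n with h | h
  · rw [podZ, if_pos (by omega), if_pos h]
    congr
    omega
  · rw [podZ, if_neg (by omega), if_neg (by omega)]

/-- Terms with `4k² > n` vanish, and any nonzero term has `k ≤ n`, so the infinite
sum `∑_{k=1}^∞` equals the finite sum over `1 ≤ k ≤ n`. -/
theorem stmt_4 (n : ℕ) :
    (Q0 n : ℤ) = pod n + 2 * ∑ k ∈ Finset.Icc 1 n, (-1 : ℤ) ^ k * (podZ ((n : ℤ) - 4 * k ^ 2) : ℤ) := by
  have h := smodEq_X_pow_iff.mp (powerSeriesMk_Q0_smodEq n) n (Nat.lt_succ_self n)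
  rw [coeff_mk, coeff_theta_mul] at h
  rw [h]
  congr 2
  refine sum_congr rfl fun k _ => ?_
  rw [show (4 * k ^ 2 : ℤ) = ((4 * k ^ 2 : ℕ) : ℤ) by push_cast; ring, podZ_natCast_sub]
  split_ifs <;> simp
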